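/- Let (x*,y*) be a stationary point with dual solution (ρ*,w*,z*) and ρ* ∈ (0,1). Then: (1) f(x*,y*) ≤ f(x,y) for every (x,y) ∈ Γ₁; (2) f(u*,v*) ≤ f(x,y) for every (x,y) ∈ Γ₂. -/
import Mathlib


open scoped BigOperators Classical
open Matrix Filter

noncomputable section

namespace TS

/-- The probability simplex in `ℝ^k`. -/
def Δ (k : ℕ) : Set (Fin k → ℝ) := {x | (∀ i, 0 ≤ x i) ∧ ∑ i, x i = 1}

/-- Maximum entry of a vector. -/
def vmax {k : ℕ} (u : Fin k → ℝ) : ℝ := ⨆ i, u i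

/-- Maximum entry of a vector over an index set. -/
def vmaxOn {k : ℕ} (S : Set (Fin k)) (u : Fin k → ℝ) : ℝ := ⨆ i ∈ S, u i

/-- The support of a vector: indices with positive entries. -/
def supp {k : ℕ} (u : Fin k → ℝ) : Set (Fin k) := {i | 0 < u i}

/-- The set of indices where `u` attains its maximum entry. -/
def suppmax {k : ℕ} (u : Fin k → ℝ) : Set (Fin k) := {i | ∀ j, u j ≤ u i}

/-- The set of indices where `u` attains its minimum entry. -/
def suppmin {k : ℕ} (u : Fin k → ℝ) : Set (Fin k) := {i | ∀ j, u i ≤ u j}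

variable {m n : ℕ}

/-- `f_R(x,y) = max(Ry) − xᵀRy`. -/
def fR (R : Matrix (Fin m) (Fin n) ℝ) (x : Fin m → ℝ) (y : Fin n → ℝ) : ℝ :=
  vmax (R.mulVec y) - x ⬝ᵥ R.mulVec y

/-- `f_C(x,y) = max(Cᵀx) − xᵀCy`. -/
def fC (C : Matrix (Fin m) (Fin n) ℝ) (x : Fin m → ℝ) (y : Fin n → ℝ) : ℝ :=
  vmax (Matrix.vecMul x C) - x ⬝ᵥ C.mulVec y

/-- `f(x,y) = max{f_R(x,y), f_C(x,y)}`. -/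
def fNE (R C : Matrix (Fin m) (Fin n) ℝ) (x : Fin m → ℝ) (y : Fin n → ℝ) : ℝ :=
  max (fR R x y) (fC C x y)

/-- `S_R(y) = suppmax(Ry)`. -/
def SR (R : Matrix (Fin m) (Fin n) ℝ) (y : Fin n → ℝ) : Set (Fin m) := suppmax (R.mulVec y)

/-- `S_C(x) = suppmax(Cᵀx)`. -/
def SC (C : Matrix (Fin m) (Fin n) ℝ) (x : Fin m → ℝ) : Set (Fin n) := suppmax (Matrix.vecMul x C)

/-- `g` has right (one-sided) derivative `d` at `0`: `lim_{θ→0⁺} (g θ − g 0)/θ = d`. -/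
def HasPosDeriv (g : ℝ → ℝ) (d : ℝ) : Prop :=
  Tendsto (fun θ : ℝ => (g θ - g 0) / θ) (nhdsWithin 0 (Set.Ioi 0)) (nhds d)

/-- `(x,y)` is a stationary point: for every `(x',y')` in the product simplex, the scaled
directional derivative `Df(x,y,x',y')` of `f` exists and is nonnegative. -/
def IsStationary (R C : Matrix (Fin m) (Fin n) ℝ) (x : Fin m → ℝ) (y : Fin n → ℝ) : Prop :=
  ∀ x' ∈ Δ m, ∀ y' ∈ Δ n, ∃ d : ℝ,
    HasPosDeriv (fun θ : ℝ => fNE R C (x + θ • (x' - x)) (y + θ • (y' - y))) d ∧ 0 ≤ d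

/-- The function `T(x,y,x',y',ρ,w,z)`. -/
def Tfun (R C : Matrix (Fin m) (Fin n) ℝ) (x : Fin m → ℝ) (y : Fin n → ℝ)
    (x' : Fin m → ℝ) (y' : Fin n → ℝ) (ρ : ℝ) (w : Fin m → ℝ) (z : Fin n → ℝ) : ℝ :=
  ρ * (w ⬝ᵥ R.mulVec y' - x ⬝ᵥ R.mulVec y' - x' ⬝ᵥ R.mulVec y + x ⬝ᵥ R.mulVec y)
    + (1 - ρ) * (x' ⬝ᵥ C.mulVec z - x ⬝ᵥ C.mulVec y' - x' ⬝ᵥ C.mulVec y + x ⬝ᵥ C.mulVec y)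

/-- Feasibility for the tuple `(ρ,w,z)`: `ρ ∈ [0,1]`, `w ∈ Δ_m` with `supp w ⊆ S_R(y)`,
`z ∈ Δ_n` with `supp z ⊆ S_C(x)`. -/
def dualFeasible (R C : Matrix (Fin m) (Fin n) ℝ) (x : Fin m → ℝ) (y : Fin n → ℝ)
    (ρ : ℝ) (w : Fin m → ℝ) (z : Fin n → ℝ) : Prop :=
  ρ ∈ Set.Icc (0:ℝ) 1 ∧ w ∈ Δ m ∧ supp w ⊆ SR R y ∧ z ∈ Δ n ∧ supp z ⊆ SC C x

/-- `max_{ρ,w,z} T(x,y,x',y',ρ,w,z)` over feasible `(ρ,w,z)`. -/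
def innerMax (R C : Matrix (Fin m) (Fin n) ℝ) (x : Fin m → ℝ) (y : Fin n → ℝ)
    (x' : Fin m → ℝ) (y' : Fin n → ℝ) : ℝ :=
  sSup {t : ℝ | ∃ ρ w z, dualFeasible R C x y ρ w z ∧ t = Tfun R C x y x' y' ρ w z}

/-- `V(x,y) = min_{(x',y') ∈ Δ_m×Δ_n} max_{ρ,w,z} T(x,y,x',y',ρ,w,z)`. -/
def Vval (R C : Matrix (Fin m) (Fin n) ℝ) (x : Fin m → ℝ) (y : Fin n → ℝ) : ℝ :=
  sInf {t : ℝ | ∃ x' ∈ Δ m, ∃ y' ∈ Δ n, t = innerMax R C x y x' y'}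

/-- `min_{(x',y') ∈ Δ_m×Δ_n} T(x,y,x',y',ρ,w,z)`. -/
def innerMin (R C : Matrix (Fin m) (Fin n) ℝ) (x : Fin m → ℝ) (y : Fin n → ℝ)
    (ρ : ℝ) (w : Fin m → ℝ) (z : Fin n → ℝ) : ℝ :=
  sInf {t : ℝ | ∃ x' ∈ Δ m, ∃ y' ∈ Δ n, t = Tfun R C x y x' y' ρ w z}

/-- `(ρ,w,z)` is a dual solution at `(x,y)`. -/
def IsDualSolution (R C : Matrix (Fin m) (Fin n) ℝ) (x : Fin m → ℝ) (y : Fin n → ℝ)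
    (ρ : ℝ) (w : Fin m → ℝ) (z : Fin n → ℝ) : Prop :=
  dualFeasible R C x y ρ w z ∧ Vval R C x y = innerMin R C x y ρ w z

/-- `(x,y)` is an `ε`-approximate Nash equilibrium. -/
def IsEpsNash (R C : Matrix (Fin m) (Fin n) ℝ) (x : Fin m → ℝ) (y : Fin n → ℝ) (ε : ℝ) : Prop :=
  (∀ x' ∈ Δ m, x' ⬝ᵥ R.mulVec y ≤ x ⬝ᵥ R.mulVec y + ε) ∧
  (∀ y' ∈ Δ n, x ⬝ᵥ C.mulVec y' ≤ x ⬝ᵥ C.mulVec y + ε)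

/-- A Nash equilibrium is a `0`-approximate Nash equilibrium. -/
def IsNash (R C : Matrix (Fin m) (Fin n) ℝ) (x : Fin m → ℝ) (y : Fin n → ℝ) : Prop :=
  IsEpsNash R C x y 0

/-- `λ* = (w*−x*)ᵀRz*`. -/
def lamStar (R : Matrix (Fin m) (Fin n) ℝ) (xs ws : Fin m → ℝ) (zs : Fin n → ℝ) : ℝ :=
  (ws - xs) ⬝ᵥ R.mulVec zs

/-- `μ* = w*ᵀC(z*−y*)`. -/
def muStar (C : Matrix (Fin m) (Fin n) ℝ) (ws : Fin m → ℝ) (ys zs : Fin n → ℝ) : ℝ :=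
  ws ⬝ᵥ C.mulVec (zs - ys)

/-- `p* = f_R(x*,z*)/(f_R(x*,z*)+f_C(w*,z*)−f_R(w*,z*))` (`= 0` if the denominator is `0`,
by the real-division-by-zero convention). -/
def pstar (R C : Matrix (Fin m) (Fin n) ℝ) (xs ws : Fin m → ℝ) (zs : Fin n → ℝ) : ℝ :=
  fR R xs zs / (fR R xs zs + fC C ws zs - fR R ws zs)

/-- `q* = f_C(w*,y*)/(f_C(w*,y*)+f_R(w*,z*)−f_C(w*,z*))` (`= 0` if the denominator is `0`). -/
def qstar (R C : Matrix (Fin m) (Fin n) ℝ) (ws : Fin m → ℝ) (ys zs : Fin n → ℝ) : ℝ :=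
  fC C ws ys / (fC C ws ys + fR R ws zs - fC C ws zs)

/-- The adjusted pair `(ũ,ṽ)` of Method 3. -/
def tildeUV (R C : Matrix (Fin m) (Fin n) ℝ) (xs : Fin m → ℝ) (ys : Fin n → ℝ)
    (ws : Fin m → ℝ) (zs : Fin n → ℝ) : (Fin m → ℝ) × (Fin n → ℝ) :=
  if fR R ws zs ≤ fC C ws zs then
    (pstar R C xs ws zs • ws + (1 - pstar R C xs ws zs) • xs, zs)
  else
    (ws, qstar R C ws ys zs • zs + (1 - qstar R C ws ys zs) • ys)

/-- `λ = min {(w*−x*)ᵀRy' : y' ∈ Δ_n, supp(y') ⊆ S_C(x*)}`. -/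
def lamM1 (R C : Matrix (Fin m) (Fin n) ℝ) (xs ws : Fin m → ℝ) : ℝ :=
  sInf {t : ℝ | ∃ y' ∈ Δ n, supp y' ⊆ SC C xs ∧ t = (ws - xs) ⬝ᵥ R.mulVec y'}

/-- `μ = min {x'ᵀC(z*−y*) : x' ∈ Δ_m, supp(x') ⊆ S_R(y*)}`. -/
def muM1 (R C : Matrix (Fin m) (Fin n) ℝ) (ys zs : Fin n → ℝ) : ℝ :=
  sInf {t : ℝ | ∃ x' ∈ Δ m, supp x' ⊆ SR R ys ∧ t = x' ⬝ᵥ C.mulVec (zs - ys)}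

/-- The adjusted pair `(x̃,ỹ)` of Method 1 (the original TS adjustment). -/
def tildeXY (R C : Matrix (Fin m) (Fin n) ℝ) (xs : Fin m → ℝ) (ys : Fin n → ℝ)
    (ws : Fin m → ℝ) (zs : Fin n → ℝ) : (Fin m → ℝ) × (Fin n → ℝ) :=
  if muM1 R C ys zs ≤ lamM1 R C xs ws then
    ((1 / (1 + lamM1 R C xs ws - muM1 R C ys zs)) • ws +
      ((lamM1 R C xs ws - muM1 R C ys zs) / (1 + lamM1 R C xs ws - muM1 R C ys zs)) • xs, zs)
  else
    (ws, (1 / (1 + muM1 R C ys zs - lamM1 R C xs ws)) • zs +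
      ((muM1 R C ys zs - lamM1 R C xs ws) / (1 + muM1 R C ys zs - lamM1 R C xs ws)) • ys)

/-- The adjusted pair `(u*,v*)` of Method 2, given the minimizers `α*`, `β*`. -/
def ustarUV (R C : Matrix (Fin m) (Fin n) ℝ) (xs : Fin m → ℝ) (ys : Fin n → ℝ)
    (ws : Fin m → ℝ) (zs : Fin n → ℝ) (αs βs : ℝ) : (Fin m → ℝ) × (Fin n → ℝ) :=
  if fR R ws zs ≤ fC C ws zs then (αs • ws + (1 - αs) • xs, zs)
  else (ws, βs • zs + (1 - βs) • ys)

/-! ### Auxiliary lemmas -/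

lemma le_vmax {k : ℕ} (u : Fin k → ℝ) (i : Fin k) : u i ≤ vmax u :=
  le_ciSup (Set.Finite.bddAbove (Set.finite_range u)) i

lemma vmax_le {k : ℕ} {u : Fin (k+1) → ℝ} {c : ℝ} (h : ∀ i, u i ≤ c) : vmax u ≤ c :=
  ciSup_le h

lemma dot_le_vmax {k : ℕ} {x u : Fin (k+1) → ℝ} (hx : x ∈ Δ (k+1)) :
    x ⬝ᵥ u ≤ vmax u := by
  calc x ⬝ᵥ u = ∑ i, x i * u i := rfl
    _ ≤ ∑ i, x i * vmax u :=
        Finset.sum_le_sum (fun i _ => mul_le_mul_of_nonneg_left (le_vmax u i) (hx.1 i))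
    _ = vmax u := by rw [← Finset.sum_mul, hx.2, one_mul]

lemma fR_nonneg {k l : ℕ} (R : Matrix (Fin (k+1)) (Fin (l+1)) ℝ)
    {x : Fin (k+1) → ℝ} (y : Fin (l+1) → ℝ) (hx : x ∈ Δ (k+1)) : 0 ≤ fR R x y :=
  sub_nonneg.2 (dot_le_vmax hx)

lemma fC_nonneg {k l : ℕ} (C : Matrix (Fin (k+1)) (Fin (l+1)) ℝ)
    (x : Fin (k+1) → ℝ) {y : Fin (l+1) → ℝ} (hy : y ∈ Δ (l+1)) : 0 ≤ fC C x y := by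
  have h : x ⬝ᵥ C.mulVec y = y ⬝ᵥ Matrix.vecMul x C := by
    rw [Matrix.dotProduct_mulVec, dotProduct_comm]
  exact sub_nonneg.2 (h ▸ dot_le_vmax hy)

lemma mulVec_mem_Icc {k l : ℕ} {A : Matrix (Fin (k+1)) (Fin (l+1)) ℝ}
    (hA : ∀ i j, A i j ∈ Set.Icc (0:ℝ) 1) {y : Fin (l+1) → ℝ} (hy : y ∈ Δ (l+1))
    (i : Fin (k+1)) : A.mulVec y i ∈ Set.Icc (0:ℝ) 1 := by
  have h1 : A.mulVec y i = ∑ j, A i j * y j := rfl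
  constructor
  · rw [h1]
    exact Finset.sum_nonneg fun j _ => mul_nonneg (hA i j).1 (hy.1 j)
  · rw [h1]
    calc ∑ j, A i j * y j ≤ ∑ j, y j :=
          Finset.sum_le_sum fun j _ => by nlinarith [(hA i j).1, (hA i j).2, hy.1 j]
      _ = 1 := hy.2

lemma dot_mulVec_mem_Icc {k l : ℕ} {A : Matrix (Fin (k+1)) (Fin (l+1)) ℝ}
    (hA : ∀ i j, A i j ∈ Set.Icc (0:ℝ) 1) {x : Fin (k+1) → ℝ} {y : Fin (l+1) → ℝ}
    (hx : x ∈ Δ (k+1)) (hy : y ∈ Δ (l+1)) : x ⬝ᵥ A.mulVec y ∈ Set.Icc (0:ℝ) 1 := by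
  have h1 : x ⬝ᵥ A.mulVec y = ∑ i, x i * A.mulVec y i := rfl
  constructor
  · rw [h1]
    exact Finset.sum_nonneg fun i _ =>
      mul_nonneg (hx.1 i) (mulVec_mem_Icc hA hy i).1
  · rw [h1]
    calc ∑ i, x i * A.mulVec y i ≤ ∑ i, x i := Finset.sum_le_sum fun i _ => by
          nlinarith [(mulVec_mem_Icc hA hy i).1, (mulVec_mem_Icc hA hy i).2, hx.1 i]
      _ = 1 := hx.2

/-- Convexity of `θ ↦ ⨆ i, (a i * θ + b i)`. -/
lemma convexOn_vmax_affine {k : ℕ} (a b : Fin (k+1) → ℝ) :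
    ConvexOn ℝ Set.univ (fun θ : ℝ => vmax (fun i => a i * θ + b i)) := by
  refine ⟨convex_univ, fun p _ q _ s t hs ht hst => ?_⟩
  refine vmax_le (fun i => ?_)
  show a i * (s • p + t • q) + b i ≤ s • vmax (fun j => a j * p + b j) + t • vmax (fun j => a j * q + b j)
  have h1 : a i * p + b i ≤ vmax (fun j => a j * p + b j) := le_vmax (fun j => a j * p + b j) i
  have h2 : a i * q + b i ≤ vmax (fun j => a j * q + b j) := le_vmax (fun j => a j * q + b j) i
  simp only [smul_eq_mul]
  have h1s := mul_le_mul_of_nonneg_left h1 hs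
  have h2t := mul_le_mul_of_nonneg_left h2 ht
  have hb : s * b i + t * b i = b i := by linear_combination (b i) * hst
  linarith [h1s, h2t, hb]

lemma convexOn_affine (a b : ℝ) : ConvexOn ℝ Set.univ (fun θ : ℝ => a * θ + b) := by
  refine ⟨convex_univ, fun p _ q _ s t hs ht hst => ?_⟩
  simp only [smul_eq_mul]
  exact le_of_eq (by linear_combination (-b) * hst)

/-- Convexity of `fNE` along a segment in the first coordinate. -/
lemma convexOn_fNE_x {k l : ℕ} (R C : Matrix (Fin (k+1)) (Fin (l+1)) ℝ)
    (x δ : Fin (k+1) → ℝ) (y : Fin (l+1) → ℝ) :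
    ConvexOn ℝ Set.univ (fun θ : ℝ => fNE R C (x + θ • δ) y) := by
  have hfR : (fun θ : ℝ => fR R (x + θ • δ) y)
      = fun θ : ℝ => (-(δ ⬝ᵥ R.mulVec y)) * θ + (vmax (R.mulVec y) - x ⬝ᵥ R.mulVec y) := by
    funext θ
    simp only [fR, add_dotProduct, smul_dotProduct, smul_eq_mul]
    ring
  have hfC : (fun θ : ℝ => fC C (x + θ • δ) y)
      = fun θ : ℝ => vmax (fun j => Matrix.vecMul δ C j * θ + Matrix.vecMul x C j)
          + ((-(δ ⬝ᵥ C.mulVec y)) * θ + (0 - x ⬝ᵥ C.mulVec y)) := by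
    funext θ
    have hv : Matrix.vecMul (x + θ • δ) C = fun j => Matrix.vecMul δ C j * θ + Matrix.vecMul x C j := by
      funext j
      simp only [Matrix.add_vecMul, Matrix.smul_vecMul, Pi.add_apply, Pi.smul_apply, smul_eq_mul]
      ring
    simp only [fC, hv, add_dotProduct, smul_dotProduct, smul_eq_mul]
    ring
  have h1 : ConvexOn ℝ Set.univ (fun θ : ℝ => fR R (x + θ • δ) y) := by
    rw [hfR]; exact convexOn_affine _ _
  have h2 : ConvexOn ℝ Set.univ (fun θ : ℝ => fC C (x + θ • δ) y) := by
    rw [hfC]; exact (convexOn_vmax_affine _ _).add (convexOn_affine _ _)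
  exact h1.sup h2

/-- Convexity of `fNE` along a segment in the second coordinate. -/
lemma convexOn_fNE_y {k l : ℕ} (R C : Matrix (Fin (k+1)) (Fin (l+1)) ℝ)
    (x : Fin (k+1) → ℝ) (y δ : Fin (l+1) → ℝ) :
    ConvexOn ℝ Set.univ (fun θ : ℝ => fNE R C x (y + θ • δ)) := by
  have hfR : (fun θ : ℝ => fR R x (y + θ • δ))
      = fun θ : ℝ => vmax (fun i => R.mulVec δ i * θ + R.mulVec y i)
          + ((-(x ⬝ᵥ R.mulVec δ)) * θ + (0 - x ⬝ᵥ R.mulVec y)) := by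
    funext θ
    have hv : R.mulVec (y + θ • δ) = fun i => R.mulVec δ i * θ + R.mulVec y i := by
      funext i
      simp only [Matrix.mulVec_add, Matrix.mulVec_smul, Pi.add_apply, Pi.smul_apply, smul_eq_mul]
      ring
    simp only [fR, hv, dotProduct_add, dotProduct_smul, smul_eq_mul]
    have : x ⬝ᵥ (fun i => R.mulVec δ i * θ + R.mulVec y i) =
        θ * (x ⬝ᵥ R.mulVec δ) + x ⬝ᵥ R.mulVec y := by
      simp only [dotProduct, Finset.mul_sum]
      rw [← Finset.sum_add_distrib]
      congr 1; funext i; ring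
    rw [this]; ring
  have hfC : (fun θ : ℝ => fC C x (y + θ • δ))
      = fun θ : ℝ => (-(x ⬝ᵥ C.mulVec δ)) * θ + (vmax (Matrix.vecMul x C) - x ⬝ᵥ C.mulVec y) := by
    funext θ
    simp only [fC, Matrix.mulVec_add, Matrix.mulVec_smul, dotProduct_add,
      dotProduct_smul, smul_eq_mul]
    ring
  have h1 : ConvexOn ℝ Set.univ (fun θ : ℝ => fR R x (y + θ • δ)) := by
    rw [hfR]; exact (convexOn_vmax_affine _ _).add (convexOn_affine _ _)
  have h2 : ConvexOn ℝ Set.univ (fun θ : ℝ => fC C x (y + θ • δ)) := by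
    rw [hfC]; exact convexOn_affine _ _
  exact h1.sup h2

/-- A convex function with nonnegative right derivative at `0` is minimized at `0`
on the right half line. -/
lemma convex_posDeriv_min {g : ℝ → ℝ} (hg : ConvexOn ℝ Set.univ g) {d : ℝ}
    (hd : HasPosDeriv g d) (hd0 : 0 ≤ d) {θ : ℝ} (hθ : 0 ≤ θ) : g 0 ≤ g θ := by
  rcases eq_or_lt_of_le hθ with h | h
  · rw [← h]
  have key : ∀ t ∈ Set.Ioo (0:ℝ) θ, (g t - g 0) / t ≤ (g θ - g 0) / θ := by
    intro t ht
    have hs : (0:ℝ) ≤ t / θ := le_of_lt (div_pos ht.1 h)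
    have hs1 : t / θ ≤ 1 := (div_le_one h).2 (le_of_lt ht.2)
    set s := t / θ with hs_def
    have hc := hg.2 (Set.mem_univ θ) (Set.mem_univ (0:ℝ)) hs (by linarith)
      (by ring : s + (1 - s) = 1)
    simp only [smul_eq_mul, mul_zero, add_zero] at hc
    have hts : s * θ = t := div_mul_cancel₀ _ (ne_of_gt h)
    rw [hts] at hc
    rw [div_le_div_iff₀ ht.1 h]
    have hc2 := mul_le_mul_of_nonneg_right hc (le_of_lt h)
    have h3 : (g t - g 0) * θ ≤ (s * g θ + (1 - s) * g 0 - g 0) * θ := by nlinarith [hc2]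
    have h4 : (s * g θ + (1 - s) * g 0 - g 0) * θ = (g θ - g 0) * t := by rw [← hts]; ring
    linarith
  have hmem : Set.Ioo (0:ℝ) θ ∈ nhdsWithin (0:ℝ) (Set.Ioi 0) :=
    Ioo_mem_nhdsGT_of_mem ⟨le_refl 0, h⟩
  have hle : d ≤ (g θ - g 0) / θ :=
    le_of_tendsto hd (Filter.eventually_iff_exists_mem.2 ⟨_, hmem, key⟩)
  have h5 : 0 ≤ (g θ - g 0) / θ := le_trans hd0 hle
  have h6 := mul_nonneg h5 (le_of_lt h)
  rw [div_mul_cancel₀ _ (ne_of_gt h)] at h6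
  linarith

lemma convex_posDeriv_min' {g : ℝ → ℝ} (hg : ConvexOn ℝ Set.univ g) {d : ℝ}
    (hd : HasPosDeriv g d) (hd0 : 0 ≤ d) {θ : ℝ} (hθ : 0 ≤ θ) : g 0 ≤ g θ :=
  convex_posDeriv_min hg hd hd0 hθ

lemma innerMax_bddAbove {m n : ℕ} (R C : Matrix (Fin (m+1)) (Fin (n+1)) ℝ)
    (hR : ∀ i j, R i j ∈ Set.Icc (0:ℝ) 1) (hC : ∀ i j, C i j ∈ Set.Icc (0:ℝ) 1)
    {xs : Fin (m+1) → ℝ} {ys : Fin (n+1) → ℝ} (hxs : xs ∈ Δ (m+1)) (hys : ys ∈ Δ (n+1))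
    {x' : Fin (m+1) → ℝ} {y' : Fin (n+1) → ℝ} (hx' : x' ∈ Δ (m+1)) (hy' : y' ∈ Δ (n+1)) :
    BddAbove {t : ℝ | ∃ ρ w z, dualFeasible R C xs ys ρ w z
      ∧ t = Tfun R C xs ys x' y' ρ w z} := by
  refine ⟨4, fun t ht => ?_⟩
  obtain ⟨ρ, w, z, ⟨hρ, hw, -, hz, -⟩, rfl⟩ := ht
  have b1 := dot_mulVec_mem_Icc hR hw hy'
  have b2 := dot_mulVec_mem_Icc hR hxs hy'
  have b3 := dot_mulVec_mem_Icc hR hx' hys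
  have b4 := dot_mulVec_mem_Icc hR hxs hys
  have b5 := dot_mulVec_mem_Icc hC hx' hz
  have b6 := dot_mulVec_mem_Icc hC hxs hy'
  have b7 := dot_mulVec_mem_Icc hC hx' hys
  have b8 := dot_mulVec_mem_Icc hC hxs hys
  have hA : w ⬝ᵥ R.mulVec y' - xs ⬝ᵥ R.mulVec y' - x' ⬝ᵥ R.mulVec ys + xs ⬝ᵥ R.mulVec ys
      ≤ 2 := by linarith [b1.2, b2.1, b3.1, b4.2]
  have hB : x' ⬝ᵥ C.mulVec z - xs ⬝ᵥ C.mulVec y' - x' ⬝ᵥ C.mulVec ys + xs ⬝ᵥ C.mulVec ys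
      ≤ 2 := by linarith [b5.2, b6.1, b7.1, b8.2]
  unfold Tfun
  have h1 := mul_le_mul_of_nonneg_left hA hρ.1
  have h2 := mul_le_mul_of_nonneg_left hB (by linarith [hρ.2] : (0:ℝ) ≤ 1 - ρ)
  nlinarith [h1, h2, hρ.1, hρ.2]

lemma innerMin_bddBelow {m n : ℕ} (R C : Matrix (Fin (m+1)) (Fin (n+1)) ℝ)
    (hR : ∀ i j, R i j ∈ Set.Icc (0:ℝ) 1) (hC : ∀ i j, C i j ∈ Set.Icc (0:ℝ) 1)
    {xs : Fin (m+1) → ℝ} {ys : Fin (n+1) → ℝ} (hxs : xs ∈ Δ (m+1)) (hys : ys ∈ Δ (n+1))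
    {ρ : ℝ} {w : Fin (m+1) → ℝ} {z : Fin (n+1) → ℝ}
    (hfeas : dualFeasible R C xs ys ρ w z) :
    BddBelow {t : ℝ | ∃ x' ∈ Δ (m+1), ∃ y' ∈ Δ (n+1), t = Tfun R C xs ys x' y' ρ w z} := by
  obtain ⟨hρ, hw, -, hz, -⟩ := hfeas
  refine ⟨-4, fun t ht => ?_⟩
  obtain ⟨x', hx', y', hy', rfl⟩ := ht
  have b1 := dot_mulVec_mem_Icc hR hw hy'
  have b2 := dot_mulVec_mem_Icc hR hxs hy'
  have b3 := dot_mulVec_mem_Icc hR hx' hys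
  have b4 := dot_mulVec_mem_Icc hR hxs hys
  have b5 := dot_mulVec_mem_Icc hC hx' hz
  have b6 := dot_mulVec_mem_Icc hC hxs hy'
  have b7 := dot_mulVec_mem_Icc hC hx' hys
  have b8 := dot_mulVec_mem_Icc hC hxs hys
  have hA : -2 ≤ w ⬝ᵥ R.mulVec y' - xs ⬝ᵥ R.mulVec y' - x' ⬝ᵥ R.mulVec ys
      + xs ⬝ᵥ R.mulVec ys := by linarith [b1.1, b2.2, b3.2, b4.1]
  have hB : -2 ≤ x' ⬝ᵥ C.mulVec z - xs ⬝ᵥ C.mulVec y' - x' ⬝ᵥ C.mulVec ys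
      + xs ⬝ᵥ C.mulVec ys := by linarith [b5.1, b6.2, b7.2, b8.1]
  unfold Tfun
  have h1 := mul_le_mul_of_nonneg_left hA hρ.1
  have h2 := mul_le_mul_of_nonneg_left hB (by linarith [hρ.2] : (0:ℝ) ≤ 1 - ρ)
  nlinarith [h1, h2, hρ.1, hρ.2]

lemma vecMul_mem_Icc {k l : ℕ} {A : Matrix (Fin (k+1)) (Fin (l+1)) ℝ}
    (hA : ∀ i j, A i j ∈ Set.Icc (0:ℝ) 1) {x : Fin (k+1) → ℝ} (hx : x ∈ Δ (k+1))
    (j : Fin (l+1)) : Matrix.vecMul x A j ∈ Set.Icc (0:ℝ) 1 := by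
  have h1 : Matrix.vecMul x A j = ∑ i, x i * A i j := rfl
  constructor
  · rw [h1]
    exact Finset.sum_nonneg fun i _ => mul_nonneg (hx.1 i) (hA i j).1
  · rw [h1]
    calc ∑ i, x i * A i j ≤ ∑ i, x i :=
          Finset.sum_le_sum fun i _ => by nlinarith [(hA i j).1, (hA i j).2, hx.1 i]
      _ = 1 := hx.2

/-- Bilinear expansion along segments. -/
lemma bil_expand {k l : ℕ} (A : Matrix (Fin (k+1)) (Fin (l+1)) ℝ)
    (xs x' : Fin (k+1) → ℝ) (ys y' : Fin (l+1) → ℝ) (θ : ℝ) :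
    (xs + θ • (x' - xs)) ⬝ᵥ A.mulVec (ys + θ • (y' - ys))
      = xs ⬝ᵥ A.mulVec ys
        + θ * (x' ⬝ᵥ A.mulVec ys - xs ⬝ᵥ A.mulVec ys + xs ⬝ᵥ A.mulVec y' - xs ⬝ᵥ A.mulVec ys)
        + θ^2 * (x' ⬝ᵥ A.mulVec y' - x' ⬝ᵥ A.mulVec ys - xs ⬝ᵥ A.mulVec y' + xs ⬝ᵥ A.mulVec ys) := by
  simp only [Matrix.mulVec_add, Matrix.mulVec_smul, Matrix.mulVec_sub, add_dotProduct,
    smul_dotProduct, sub_dotProduct, dotProduct_add, dotProduct_smul,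
    dotProduct_sub, smul_eq_mul]
  ring

lemma fR_upper {k l : ℕ} (R : Matrix (Fin (k+1)) (Fin (l+1)) ℝ)
    (xs x' : Fin (k+1) → ℝ) (ys y' : Fin (l+1) → ℝ) (θ c : ℝ)
    (hv : vmax (R.mulVec (ys + θ • (y' - ys))) ≤ (1 - θ) * vmax (R.mulVec ys) + θ * c) :
    fR R (xs + θ • (x' - xs)) (ys + θ • (y' - ys)) ≤ fR R xs ys
      + θ * ((c - xs ⬝ᵥ R.mulVec y' - x' ⬝ᵥ R.mulVec ys + xs ⬝ᵥ R.mulVec ys) - fR R xs ys)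
      + θ^2 * (x' ⬝ᵥ R.mulVec ys + xs ⬝ᵥ R.mulVec y' - xs ⬝ᵥ R.mulVec ys - x' ⬝ᵥ R.mulVec y') := by
  have hbil := bil_expand R xs x' ys y' θ
  unfold fR
  rw [hbil]
  linarith [hv]

lemma fC_upper {k l : ℕ} (C : Matrix (Fin (k+1)) (Fin (l+1)) ℝ)
    (xs x' : Fin (k+1) → ℝ) (ys y' : Fin (l+1) → ℝ) (θ c : ℝ)
    (hv : vmax (Matrix.vecMul (xs + θ • (x' - xs)) C)
        ≤ (1 - θ) * vmax (Matrix.vecMul xs C) + θ * c) :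
    fC C (xs + θ • (x' - xs)) (ys + θ • (y' - ys)) ≤ fC C xs ys
      + θ * ((c - xs ⬝ᵥ C.mulVec y' - x' ⬝ᵥ C.mulVec ys + xs ⬝ᵥ C.mulVec ys) - fC C xs ys)
      + θ^2 * (x' ⬝ᵥ C.mulVec ys + xs ⬝ᵥ C.mulVec y' - xs ⬝ᵥ C.mulVec ys - x' ⬝ᵥ C.mulVec y') := by
  have hbil := bil_expand C xs x' ys y' θ
  unfold fC
  rw [hbil]
  linarith [hv]

/-- The single vector `Pi.single i 1` is in the simplex. -/
lemma single_mem_simplex {k : ℕ} (i : Fin (k+1)) : (Pi.single i 1 : Fin (k+1) → ℝ) ∈ Δ (k+1) := by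
  constructor
  · intro j
    rcases eq_or_ne j i with rfl | hne
    · simp
    · rw [Pi.single_eq_of_ne hne]
  · simpa using Finset.sum_pi_single' i (1:ℝ) Finset.univ

lemma supp_single_subset {k : ℕ} {i : Fin (k+1)} {S : Set (Fin (k+1))} (hi : i ∈ S) :
    supp (Pi.single i 1 : Fin (k+1) → ℝ) ⊆ S := by
  intro j hj
  rcases eq_or_ne j i with rfl | hne
  · exact hi
  · exfalso
    have : (Pi.single i 1 : Fin (k+1) → ℝ) j = 0 := Pi.single_eq_of_ne hne 1
    rw [supp, Set.mem_setOf_eq, this] at hj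
    exact lt_irrefl 0 hj

set_option maxHeartbeats 1000000 in
/-- Key consequence of stationarity: the inner maximum is nonnegative in every direction. -/
lemma innerMax_nonneg {m n : ℕ} (R C : Matrix (Fin (m+1)) (Fin (n+1)) ℝ)
    (hR : ∀ i j, R i j ∈ Set.Icc (0:ℝ) 1) (hC : ∀ i j, C i j ∈ Set.Icc (0:ℝ) 1)
    {xs : Fin (m+1) → ℝ} {ys : Fin (n+1) → ℝ} (hxs : xs ∈ Δ (m+1)) (hys : ys ∈ Δ (n+1))
    (hstat : IsStationary R C xs ys)
    {x' : Fin (m+1) → ℝ} {y' : Fin (n+1) → ℝ} (hx' : x' ∈ Δ (m+1)) (hy' : y' ∈ Δ (n+1)) :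
    0 ≤ innerMax R C xs ys x' y' := by
  classical
  -- argmax of `R.mulVec y'` over `SR R ys`
  have hSRne : ∃ i0 : Fin (m+1), i0 ∈ SR R ys := by
    obtain ⟨i0, -, hi0⟩ := Finset.exists_max_image Finset.univ (R.mulVec ys) ⟨0, Finset.mem_univ 0⟩
    exact ⟨i0, fun j => hi0 j (Finset.mem_univ j)⟩
  obtain ⟨istar, histar, hmaxR⟩ := Finset.exists_max_image
    (Finset.univ.filter (· ∈ SR R ys)) (R.mulVec y')
    (by obtain ⟨i0, hi0⟩ := hSRne; exact ⟨i0, by simp [hi0]⟩)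
  have histar' : istar ∈ SR R ys := by simpa using histar
  have hmaxR' : ∀ i ∈ SR R ys, R.mulVec y' i ≤ R.mulVec y' istar :=
    fun i hi => hmaxR i (by simp [hi])
  -- argmax of `vecMul x' C` over `SC C xs`
  have hSCne : ∃ j0 : Fin (n+1), j0 ∈ SC C xs := by
    obtain ⟨j0, -, hj0⟩ := Finset.exists_max_image Finset.univ (Matrix.vecMul xs C)
      ⟨0, Finset.mem_univ 0⟩
    exact ⟨j0, fun j => hj0 j (Finset.mem_univ j)⟩
  obtain ⟨jstar, hjstar, hmaxC⟩ := Finset.exists_max_image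
    (Finset.univ.filter (· ∈ SC C xs)) (Matrix.vecMul x' C)
    (by obtain ⟨j0, hj0⟩ := hSCne; exact ⟨j0, by simp [hj0]⟩)
  have hjstar' : jstar ∈ SC C xs := by simpa using hjstar
  have hmaxC' : ∀ j ∈ SC C xs, Matrix.vecMul x' C j ≤ Matrix.vecMul x' C jstar :=
    fun j hj => hmaxC j (by simp [hj])
  -- abbreviations
  set vR := vmax (R.mulVec ys) with hvR
  set vC := vmax (Matrix.vecMul xs C) with hvC
  set A := R.mulVec y' istar - xs ⬝ᵥ R.mulVec y' - x' ⬝ᵥ R.mulVec ys + xs ⬝ᵥ R.mulVec ys with hA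
  set B := Matrix.vecMul x' C jstar - xs ⬝ᵥ C.mulVec y' - x' ⬝ᵥ C.mulVec ys + xs ⬝ᵥ C.mulVec ys
    with hB
  set fR0 := fR R xs ys with hfR0
  set fC0 := fC C xs ys with hfC0
  set cR := x' ⬝ᵥ R.mulVec ys + xs ⬝ᵥ R.mulVec y' - xs ⬝ᵥ R.mulVec ys - x' ⬝ᵥ R.mulVec y' with hcR
  set cC := x' ⬝ᵥ C.mulVec ys + xs ⬝ᵥ C.mulVec y' - xs ⬝ᵥ C.mulVec ys - x' ⬝ᵥ C.mulVec y' with hcC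
  set M := max (A - fR0) (B - fC0) with hM
  set K := |cR| + |cC| with hK
  -- eventual bound on vmax (R.mulVec (ys + θ • (y' - ys)))
  have hexpR : ∀ (θ : ℝ) (i : Fin (m+1)), R.mulVec (ys + θ • (y' - ys)) i
      = R.mulVec ys i + θ * (R.mulVec y' i - R.mulVec ys i) := by
    intro θ i
    simp only [Matrix.mulVec_add, Matrix.mulVec_smul, Matrix.mulVec_sub, Pi.add_apply,
      Pi.smul_apply, Pi.sub_apply, smul_eq_mul]
    try ring
  have EvR : ∀ᶠ θ in nhdsWithin (0:ℝ) (Set.Ioi 0), ∀ i,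
      R.mulVec (ys + θ • (y' - ys)) i ≤ (1 - θ) * vR + θ * R.mulVec y' istar := by
    rw [Filter.eventually_all]
    intro i
    by_cases hi : i ∈ SR R ys
    · filter_upwards [Ioo_mem_nhdsGT_of_mem (Set.mem_Ico.2 ⟨le_refl (0:ℝ), zero_lt_one⟩)]
        with θ hθ
      have h1 : R.mulVec ys i = vR := le_antisymm (le_vmax _ i) (vmax_le hi)
      have h2 : R.mulVec y' i ≤ R.mulVec y' istar := hmaxR' i hi
      rw [hexpR θ i, h1]
      nlinarith [hθ.1.le, mul_le_mul_of_nonneg_left h2 hθ.1.le]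
    · have hgap : R.mulVec ys i < vR := by
        by_contra hcon
        push_neg at hcon
        exact hi fun j => le_trans (le_vmax _ j) hcon
      have hmem : Set.Ioo (0:ℝ) ((vR - R.mulVec ys i) / (vR - R.mulVec ys i + 1))
          ∈ nhdsWithin (0:ℝ) (Set.Ioi 0) := by
        apply Ioo_mem_nhdsGT_of_mem
        constructor
        · exact le_refl 0
        · have h0 : 0 < vR - R.mulVec ys i := by linarith
          positivity
      filter_upwards [hmem] with θ hθ
      rw [hexpR θ i]
      have hb1 : R.mulVec y' i ≤ 1 := (mulVec_mem_Icc hR hy' i).2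
      have hb2 : 0 ≤ R.mulVec y' istar := (mulVec_mem_Icc hR hy' istar).1
      have h0 : 0 < vR - R.mulVec ys i := by linarith
      have hθ2 : θ * (vR - R.mulVec ys i + 1) < vR - R.mulVec ys i :=
        (lt_div_iff₀ (by positivity)).1 hθ.2
      nlinarith [hθ.1.le, mul_le_mul_of_nonneg_left hb1 hθ.1.le, mul_nonneg hθ.1.le hb2]
  have EvRmax : ∀ᶠ θ in nhdsWithin (0:ℝ) (Set.Ioi 0),
      vmax (R.mulVec (ys + θ • (y' - ys))) ≤ (1 - θ) * vR + θ * R.mulVec y' istar :=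
    EvR.mono fun θ h => vmax_le h
  -- eventual bound on vmax (vecMul (xs + θ • (x' - xs)) C)
  have hexpC : ∀ (θ : ℝ) (j : Fin (n+1)), Matrix.vecMul (xs + θ • (x' - xs)) C j
      = Matrix.vecMul xs C j + θ * (Matrix.vecMul x' C j - Matrix.vecMul xs C j) := by
    intro θ j
    simp only [Matrix.add_vecMul, Matrix.smul_vecMul, Matrix.sub_vecMul, Pi.add_apply,
      Pi.smul_apply, Pi.sub_apply, smul_eq_mul]
    try ring
  have EvC : ∀ᶠ θ in nhdsWithin (0:ℝ) (Set.Ioi 0), ∀ j,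
      Matrix.vecMul (xs + θ • (x' - xs)) C j ≤ (1 - θ) * vC + θ * Matrix.vecMul x' C jstar := by
    rw [Filter.eventually_all]
    intro j
    by_cases hj : j ∈ SC C xs
    · filter_upwards [Ioo_mem_nhdsGT_of_mem (Set.mem_Ico.2 ⟨le_refl (0:ℝ), zero_lt_one⟩)]
        with θ hθ
      have h1 : Matrix.vecMul xs C j = vC := le_antisymm (le_vmax _ j) (vmax_le hj)
      have h2 : Matrix.vecMul x' C j ≤ Matrix.vecMul x' C jstar := hmaxC' j hj
      rw [hexpC θ j, h1]
      nlinarith [hθ.1.le, mul_le_mul_of_nonneg_left h2 hθ.1.le]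
    · have hgap : Matrix.vecMul xs C j < vC := by
        by_contra hcon
        push_neg at hcon
        exact hj fun i => le_trans (le_vmax _ i) hcon
      have hmem : Set.Ioo (0:ℝ) ((vC - Matrix.vecMul xs C j) / (vC - Matrix.vecMul xs C j + 1))
          ∈ nhdsWithin (0:ℝ) (Set.Ioi 0) := by
        apply Ioo_mem_nhdsGT_of_mem
        constructor
        · exact le_refl 0
        · have h0 : 0 < vC - Matrix.vecMul xs C j := by linarith
          positivity
      filter_upwards [hmem] with θ hθ
      rw [hexpC θ j]
      have hb1 : Matrix.vecMul x' C j ≤ 1 := (vecMul_mem_Icc hC hx' j).2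
      have hb2 : 0 ≤ Matrix.vecMul x' C jstar := (vecMul_mem_Icc hC hx' jstar).1
      have h0 : 0 < vC - Matrix.vecMul xs C j := by linarith
      have hθ2 : θ * (vC - Matrix.vecMul xs C j + 1) < vC - Matrix.vecMul xs C j :=
        (lt_div_iff₀ (by positivity)).1 hθ.2
      nlinarith [hθ.1.le, mul_le_mul_of_nonneg_left hb1 hθ.1.le, mul_nonneg hθ.1.le hb2]
  have EvCmax : ∀ᶠ θ in nhdsWithin (0:ℝ) (Set.Ioi 0),
      vmax (Matrix.vecMul (xs + θ • (x' - xs)) C) ≤ (1 - θ) * vC + θ * Matrix.vecMul x' C jstar :=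
    EvC.mono fun θ h => vmax_le h
  -- the directional derivative is at most M
  obtain ⟨d, hd, hd0⟩ := hstat x' hx' y' hy'
  have hd' : Filter.Tendsto
      (fun θ : ℝ => (fNE R C (xs + θ • (x' - xs)) (ys + θ • (y' - ys)) - fNE R C xs ys) / θ)
      (nhdsWithin (0:ℝ) (Set.Ioi 0)) (nhds d) := by
    have := hd
    unfold HasPosDeriv at this
    simpa only [zero_smul, add_zero] using this
  have EvQ : ∀ᶠ θ in nhdsWithin (0:ℝ) (Set.Ioi 0),
      (fNE R C (xs + θ • (x' - xs)) (ys + θ • (y' - ys)) - fNE R C xs ys) / θ ≤ M + θ * K := by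
    filter_upwards [EvRmax, EvCmax,
      Ioo_mem_nhdsGT_of_mem (Set.mem_Ico.2 ⟨le_refl (0:ℝ), zero_lt_one⟩)] with θ hRv hCv hθ
    have hθ0 : 0 < θ := hθ.1
    have hfRb := fR_upper R xs x' ys y' θ (R.mulVec y' istar) hRv
    have hfCb := fC_upper C xs x' ys y' θ (Matrix.vecMul x' C jstar) hCv
    have hAM : A - fR0 ≤ M := le_max_left _ _
    have hBM : B - fC0 ≤ M := le_max_right _ _
    have hcRK : cR ≤ K := by
      have := le_abs_self cR
      have := abs_nonneg cC
      simp only [hK]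
      linarith
    have hcCK : cC ≤ K := by
      have := le_abs_self cC
      have := abs_nonneg cR
      simp only [hK]
      linarith
    have hgθ : fNE R C (xs + θ • (x' - xs)) (ys + θ • (y' - ys))
        ≤ max fR0 fC0 + θ * M + θ^2 * K := by
      apply max_le
      · have h1 : θ * ((R.mulVec y' istar - xs ⬝ᵥ R.mulVec y' - x' ⬝ᵥ R.mulVec ys
            + xs ⬝ᵥ R.mulVec ys) - fR0) ≤ θ * M := by
          apply mul_le_mul_of_nonneg_left _ hθ0.le
          have : R.mulVec y' istar - xs ⬝ᵥ R.mulVec y' - x' ⬝ᵥ R.mulVec ys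
              + xs ⬝ᵥ R.mulVec ys = A := by rw [hA]
          rw [this]; exact hAM
        have h2 : θ^2 * (x' ⬝ᵥ R.mulVec ys + xs ⬝ᵥ R.mulVec y' - xs ⬝ᵥ R.mulVec ys
            - x' ⬝ᵥ R.mulVec y') ≤ θ^2 * K := by
          apply mul_le_mul_of_nonneg_left _ (sq_nonneg θ)
          have : x' ⬝ᵥ R.mulVec ys + xs ⬝ᵥ R.mulVec y' - xs ⬝ᵥ R.mulVec ys
              - x' ⬝ᵥ R.mulVec y' = cR := by rw [hcR]
          rw [this]; exact hcRK
        have h3 : fR0 ≤ max fR0 fC0 := le_max_left _ _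
        calc fR R (xs + θ • (x' - xs)) (ys + θ • (y' - ys)) ≤ _ := hfRb
          _ ≤ max fR0 fC0 + θ * M + θ^2 * K := by rw [← hfR0]; linarith
      · have h1 : θ * ((Matrix.vecMul x' C jstar - xs ⬝ᵥ C.mulVec y' - x' ⬝ᵥ C.mulVec ys
            + xs ⬝ᵥ C.mulVec ys) - fC0) ≤ θ * M := by
          apply mul_le_mul_of_nonneg_left _ hθ0.le
          have : Matrix.vecMul x' C jstar - xs ⬝ᵥ C.mulVec y' - x' ⬝ᵥ C.mulVec ys
              + xs ⬝ᵥ C.mulVec ys = B := by rw [hB]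
          rw [this]; exact hBM
        have h2 : θ^2 * (x' ⬝ᵥ C.mulVec ys + xs ⬝ᵥ C.mulVec y' - xs ⬝ᵥ C.mulVec ys
            - x' ⬝ᵥ C.mulVec y') ≤ θ^2 * K := by
          apply mul_le_mul_of_nonneg_left _ (sq_nonneg θ)
          have : x' ⬝ᵥ C.mulVec ys + xs ⬝ᵥ C.mulVec y' - xs ⬝ᵥ C.mulVec ys
              - x' ⬝ᵥ C.mulVec y' = cC := by rw [hcC]
          rw [this]; exact hcCK
        have h3 : fC0 ≤ max fR0 fC0 := le_max_right _ _
        calc fC C (xs + θ • (x' - xs)) (ys + θ • (y' - ys)) ≤ _ := hfCb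
          _ ≤ max fR0 fC0 + θ * M + θ^2 * K := by rw [← hfC0]; linarith
    have hg0 : fNE R C xs ys = max fR0 fC0 := by rw [hfR0, hfC0]; rfl
    rw [div_le_iff₀ hθ0, hg0]
    linarith [hgθ]
  have hdM : d ≤ M := by
    have htend : Filter.Tendsto (fun θ : ℝ => M + θ * K)
        (nhdsWithin (0:ℝ) (Set.Ioi 0)) (nhds M) := by
      have h1 : Filter.Tendsto (fun θ : ℝ => M + θ * K) (nhds (0:ℝ)) (nhds (M + 0 * K)) :=
        (continuous_const.add (continuous_id.mul continuous_const)).tendsto 0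
      simpa using h1.mono_left nhdsWithin_le_nhds
    exact le_of_tendsto_of_tendsto hd' htend EvQ
  -- conclusion
  have hfR0' : 0 ≤ fR0 := fR_nonneg R ys hxs
  have hfC0' : 0 ≤ fC0 := fC_nonneg C xs hys
  have hbdd := innerMax_bddAbove R C hR hC hxs hys hx' hy'
  rcases le_total (B - fC0) (A - fR0) with hAB | hAB
  · have hMA : M = A - fR0 := max_eq_left hAB
    have hA0 : 0 ≤ A := by rw [hMA] at hdM; linarith
    have hTval : Tfun R C xs ys x' y' 1 ((Pi.single istar 1 : Fin (m+1) → ℝ))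
        ((Pi.single jstar 1 : Fin (n+1) → ℝ)) = A := by
      unfold Tfun
      rw [single_dotProduct, hA]
      ring
    have hfeas : dualFeasible R C xs ys 1 (Pi.single istar 1) (Pi.single jstar 1) :=
      ⟨⟨zero_le_one, le_refl 1⟩, single_mem_simplex istar, supp_single_subset histar',
        single_mem_simplex jstar, supp_single_subset hjstar'⟩
    have hmem : A ∈ {t : ℝ | ∃ ρ w z, dualFeasible R C xs ys ρ w z
        ∧ t = Tfun R C xs ys x' y' ρ w z} :=
      ⟨1, Pi.single istar 1, Pi.single jstar 1, hfeas, hTval.symm⟩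
    exact le_trans hA0 (le_csSup hbdd hmem)
  · have hMB : M = B - fC0 := max_eq_right hAB
    have hB0 : 0 ≤ B := by rw [hMB] at hdM; linarith
    have hx'z : x' ⬝ᵥ C.mulVec (Pi.single jstar 1 : Fin (n+1) → ℝ)
        = Matrix.vecMul x' C jstar := by
      rw [Matrix.dotProduct_mulVec, dotProduct_single, mul_one]
    have hTval : Tfun R C xs ys x' y' 0 ((Pi.single istar 1 : Fin (m+1) → ℝ))
        ((Pi.single jstar 1 : Fin (n+1) → ℝ)) = B := by
      unfold Tfun
      rw [hx'z, hB]
      ring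
    have hfeas : dualFeasible R C xs ys 0 (Pi.single istar 1) (Pi.single jstar 1) :=
      ⟨⟨le_refl 0, zero_le_one⟩, single_mem_simplex istar, supp_single_subset histar',
        single_mem_simplex jstar, supp_single_subset hjstar'⟩
    have hmem : B ∈ {t : ℝ | ∃ ρ w z, dualFeasible R C xs ys ρ w z
        ∧ t = Tfun R C xs ys x' y' ρ w z} :=
      ⟨0, Pi.single istar 1, Pi.single jstar 1, hfeas, hTval.symm⟩
    exact le_trans hB0 (le_csSup hbdd hmem)

lemma Vval_nonneg {m n : ℕ} (R C : Matrix (Fin (m+1)) (Fin (n+1)) ℝ)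
    (hR : ∀ i j, R i j ∈ Set.Icc (0:ℝ) 1) (hC : ∀ i j, C i j ∈ Set.Icc (0:ℝ) 1)
    {xs : Fin (m+1) → ℝ} {ys : Fin (n+1) → ℝ} (hxs : xs ∈ Δ (m+1)) (hys : ys ∈ Δ (n+1))
    (hstat : IsStationary R C xs ys) : 0 ≤ Vval R C xs ys := by
  unfold Vval
  apply le_csInf
  · exact ⟨innerMax R C xs ys xs ys, xs, hxs, ys, hys, rfl⟩
  · rintro b ⟨x', hx', y', hy', rfl⟩
    exact innerMax_nonneg R C hR hC hxs hys hstat hx' hy'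

/-- `(x*,y*)` minimizes `f` on `Γ₁` and `(u*,v*)` minimizes `f` on `Γ₂`. -/
theorem stmt5 {m n : ℕ} (R C : Matrix (Fin (m+1)) (Fin (n+1)) ℝ)
    (hR : ∀ i j, R i j ∈ Set.Icc (0:ℝ) 1) (hC : ∀ i j, C i j ∈ Set.Icc (0:ℝ) 1)
    (xs : Fin (m+1) → ℝ) (ys : Fin (n+1) → ℝ) (ρs : ℝ) (ws : Fin (m+1) → ℝ) (zs : Fin (n+1) → ℝ)
    (hxs : xs ∈ Δ (m+1)) (hys : ys ∈ Δ (n+1))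
    (hstat : IsStationary R C xs ys)
    (hdual : IsDualSolution R C xs ys ρs ws zs)
    (hρ : ρs ∈ Set.Ioo (0:ℝ) 1)
    (αs βs : ℝ) (hαs : αs ∈ Set.Icc (0:ℝ) 1) (hβs : βs ∈ Set.Icc (0:ℝ) 1)
    (hαmin : ∀ α ∈ Set.Icc (0:ℝ) 1,
      fNE R C (αs • ws + (1 - αs) • xs) zs ≤ fNE R C (α • ws + (1 - α) • xs) zs)
    (hβmin : ∀ β ∈ Set.Icc (0:ℝ) 1,
      fNE R C ws (βs • zs + (1 - βs) • ys) ≤ fNE R C ws (β • zs + (1 - β) • ys)) :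
    (∀ p ∈ ({p | ∃ α ∈ Set.Icc (0:ℝ) 1, p = (α • xs + (1 - α) • ws, ys)} ∪
        {p | ∃ β ∈ Set.Icc (0:ℝ) 1, p = (xs, β • ys + (1 - β) • zs)} :
        Set ((Fin (m+1) → ℝ) × (Fin (n+1) → ℝ))),
        fNE R C xs ys ≤ fNE R C p.1 p.2) ∧
    (∀ p ∈ ({p | ∃ α ∈ Set.Icc (0:ℝ) 1, p = (α • xs + (1 - α) • ws, zs)} ∪
        {p | ∃ β ∈ Set.Icc (0:ℝ) 1, p = (ws, β • ys + (1 - β) • zs)} :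
        Set ((Fin (m+1) → ℝ) × (Fin (n+1) → ℝ))),
        fNE R C (ustarUV R C xs ys ws zs αs βs).1 (ustarUV R C xs ys ws zs αs βs).2
          ≤ fNE R C p.1 p.2) := by
  obtain ⟨hfeas, hVeq⟩ := hdual
  obtain ⟨hρIcc, hwsΔ, hwsupp, hzsΔ, hzsupp⟩ := hfeas
  have hV0 : 0 ≤ Vval R C xs ys := Vval_nonneg R C hR hC hxs hys hstat
  have hbb := innerMin_bddBelow R C hR hC hxs hys
    (⟨hρIcc, hwsΔ, hwsupp, hzsΔ, hzsupp⟩ : dualFeasible R C xs ys ρs ws zs)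
  -- λ* ≥ 0
  have hTlam : Tfun R C xs ys xs zs ρs ws zs = ρs * ((ws - xs) ⬝ᵥ R.mulVec zs) := by
    unfold Tfun
    rw [sub_dotProduct]
    ring
  have hlam0 : 0 ≤ (ws - xs) ⬝ᵥ R.mulVec zs := by
    have h1 : innerMin R C xs ys ρs ws zs ≤ Tfun R C xs ys xs zs ρs ws zs :=
      csInf_le hbb ⟨xs, hxs, zs, hzsΔ, rfl⟩
    rw [← hVeq, hTlam] at h1
    by_contra hneg
    push_neg at hneg
    have : ρs * ((ws - xs) ⬝ᵥ R.mulVec zs) < 0 := mul_neg_of_pos_of_neg hρ.1 hneg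
    linarith
  -- μ* ≥ 0
  have hTmu : Tfun R C xs ys ws ys ρs ws zs = (1 - ρs) * (ws ⬝ᵥ C.mulVec (zs - ys)) := by
    unfold Tfun
    rw [Matrix.mulVec_sub, dotProduct_sub]
    ring
  have hmu0 : 0 ≤ ws ⬝ᵥ C.mulVec (zs - ys) := by
    have h1 : innerMin R C xs ys ρs ws zs ≤ Tfun R C xs ys ws ys ρs ws zs :=
      csInf_le hbb ⟨ws, hwsΔ, ys, hys, rfl⟩
    rw [← hVeq, hTmu] at h1
    by_contra hneg
    push_neg at hneg
    have : (1 - ρs) * (ws ⬝ᵥ C.mulVec (zs - ys)) < 0 :=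
      mul_neg_of_pos_of_neg (by linarith [hρ.2]) hneg
    linarith
  constructor
  · -- part 1 : (x*,y*) minimizes f on Γ₁
    rintro p (hp | hp)
    · obtain ⟨α, hα, rfl⟩ := hp
      obtain ⟨d, hd, hd0⟩ := hstat ws hwsΔ ys hys
      have hconv : ConvexOn ℝ Set.univ
          (fun θ : ℝ => fNE R C (xs + θ • (ws - xs)) (ys + θ • (ys - ys))) := by
        rw [show (fun θ : ℝ => fNE R C (xs + θ • (ws - xs)) (ys + θ • (ys - ys)))
            = fun θ : ℝ => fNE R C (xs + θ • (ws - xs)) ys from funext fun θ => by simp]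
        exact convexOn_fNE_x R C xs (ws - xs) ys
      have hmin := convex_posDeriv_min hconv hd hd0 (by linarith [hα.2] : (0:ℝ) ≤ 1 - α)
      simp only [zero_smul, add_zero, sub_self, smul_zero] at hmin
      have hgθ : xs + (1 - α) • (ws - xs) = α • xs + (1 - α) • ws := by
        funext i
        simp only [Pi.add_apply, Pi.smul_apply, Pi.sub_apply, smul_eq_mul]
        ring
      rw [hgθ] at hmin
      exact hmin
    · obtain ⟨β, hβ, rfl⟩ := hp
      obtain ⟨d, hd, hd0⟩ := hstat xs hxs zs hzsΔ
      have hconv : ConvexOn ℝ Set.univ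
          (fun θ : ℝ => fNE R C (xs + θ • (xs - xs)) (ys + θ • (zs - ys))) := by
        rw [show (fun θ : ℝ => fNE R C (xs + θ • (xs - xs)) (ys + θ • (zs - ys)))
            = fun θ : ℝ => fNE R C xs (ys + θ • (zs - ys)) from funext fun θ => by simp]
        exact convexOn_fNE_y R C xs ys (zs - ys)
      have hmin := convex_posDeriv_min hconv hd hd0 (by linarith [hβ.2] : (0:ℝ) ≤ 1 - β)
      simp only [zero_smul, add_zero, sub_self, smul_zero] at hmin
      have hgθ : ys + (1 - β) • (zs - ys) = β • ys + (1 - β) • zs := by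
        funext i
        simp only [Pi.add_apply, Pi.smul_apply, Pi.sub_apply, smul_eq_mul]
        ring
      rw [hgθ] at hmin
      exact hmin
  · -- part 2 : (u*,v*) minimizes f on Γ₂
    by_cases hcase : fR R ws zs ≤ fC C ws zs
    · have hu : ustarUV R C xs ys ws zs αs βs = (αs • ws + (1 - αs) • xs, zs) :=
        if_pos hcase
      rintro p (hp | hp)
      · obtain ⟨α, hα, rfl⟩ := hp
        have h1 := hαmin (1 - α) ⟨by linarith [hα.2], by linarith [hα.1]⟩
        have he : (1 - α) • ws + (1 - (1 - α)) • xs = α • xs + (1 - α) • ws := by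
          funext i
          simp only [Pi.add_apply, Pi.smul_apply, smul_eq_mul]
          ring
        rw [he] at h1
        rw [hu]
        exact h1
      · obtain ⟨β, hβ, rfl⟩ := hp
        have h1 := hαmin 1 ⟨zero_le_one, le_refl 1⟩
        simp only [one_smul, sub_self, zero_smul, add_zero] at h1
        have h2 : fNE R C ws zs = fC C ws zs := max_eq_right hcase
        have h3 : fC C ws (β • ys + (1 - β) • zs)
            = fC C ws zs + β * (ws ⬝ᵥ C.mulVec (zs - ys)) := by
          unfold fC
          rw [Matrix.mulVec_add, Matrix.mulVec_smul, Matrix.mulVec_smul, Matrix.mulVec_sub,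
            dotProduct_add, dotProduct_smul, dotProduct_smul,
            dotProduct_sub]
          simp only [smul_eq_mul]
          ring
        have h4 : fC C ws (β • ys + (1 - β) • zs) ≤ fNE R C ws (β • ys + (1 - β) • zs) :=
          le_max_right _ _
        have h5 : 0 ≤ β * (ws ⬝ᵥ C.mulVec (zs - ys)) := mul_nonneg hβ.1 hmu0
        rw [hu]
        show fNE R C (αs • ws + (1 - αs) • xs) zs ≤ fNE R C ws (β • ys + (1 - β) • zs)
        linarith [h1, h2, h3, h4, h5]
    · push_neg at hcase
      have hu : ustarUV R C xs ys ws zs αs βs = (ws, βs • zs + (1 - βs) • ys) :=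
        if_neg (not_le.2 hcase)
      rintro p (hp | hp)
      · obtain ⟨α, hα, rfl⟩ := hp
        have h1 := hβmin 1 ⟨zero_le_one, le_refl 1⟩
        simp only [one_smul, sub_self, zero_smul, add_zero] at h1
        have h2 : fNE R C ws zs = fR R ws zs := max_eq_left hcase.le
        have h3 : fR R (α • xs + (1 - α) • ws) zs
            = fR R ws zs + α * ((ws - xs) ⬝ᵥ R.mulVec zs) := by
          unfold fR
          rw [add_dotProduct, smul_dotProduct, smul_dotProduct,
            sub_dotProduct]
          simp only [smul_eq_mul]
          ring
        have h4 : fR R (α • xs + (1 - α) • ws) zs ≤ fNE R C (α • xs + (1 - α) • ws) zs :=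
          le_max_left _ _
        have h5 : 0 ≤ α * ((ws - xs) ⬝ᵥ R.mulVec zs) := mul_nonneg hα.1 hlam0
        rw [hu]
        show fNE R C ws (βs • zs + (1 - βs) • ys) ≤ fNE R C (α • xs + (1 - α) • ws) zs
        linarith [h1, h2, h3, h4, h5]
      · obtain ⟨β, hβ, rfl⟩ := hp
        have h1 := hβmin (1 - β) ⟨by linarith [hβ.2], by linarith [hβ.1]⟩
        have he : (1 - β) • zs + (1 - (1 - β)) • ys = β • ys + (1 - β) • zs := by
          funext i
          simp only [Pi.add_apply, Pi.smul_apply, smul_eq_mul]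
          ring
        rw [he] at h1
        rw [hu]
        exact h1

end TS
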